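/- In the Melikian algebra M over a field of characteristic 5, Sq(D_i)(x_iD_j, x_i⁴x_jD_j) = D_j and Sq(D_i)(x_iD_j, x_i³x_j²D_j) = 0 for i ≠ j, and the classes of Sq(D₁) and Sq(D₂) are linearly independent in H²(M,M). -/

import Mathlib

open scoped BigOperators

namespace Melikian

/-- Index set for monomials in the truncated polynomial algebra
`A(2) = F[x₁,x₂]/(x₁⁵,x₂⁵)`. -/
abbrev Idx : Type := Fin 5 × Fin 5

/-- The truncated polynomial algebra `A(2)`, as functions on monomial exponents. -/
abbrev A (F : Type*) [Field F] : Type _ := Idx → F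

variable {F : Type*} [Field F]

/-- The monomial `x^b = x₁^{b₁} x₂^{b₂}`. -/
def X (b : Idx) : A F := fun a => if a = b then 1 else 0

/-- Truncated multiplication of `A(2)`. -/
def mulA (f g : A F) : A F := fun a =>
  ∑ b : Idx, ∑ c : Idx,
    if b.1.val + c.1.val = a.1.val ∧ b.2.val + c.2.val = a.2.val then f b * g c else 0

/-- Partial derivative `∂/∂x₁` on `A(2)`. -/
def d1 (f : A F) : A F := fun a =>
  if h : a.1.val + 1 < 5 then ((a.1.val + 1 : ℕ) : F) * f (⟨a.1.val + 1, h⟩, a.2) else 0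

/-- Partial derivative `∂/∂x₂` on `A(2)`. -/
def d2 (f : A F) : A F := fun a =>
  if h : a.2.val + 1 < 5 then ((a.2.val + 1 : ℕ) : F) * f (a.1, ⟨a.2.val + 1, h⟩) else 0

/-- The Witt–Jacobson algebra `W(2)` as a free `A(2)`-module with basis `D₁, D₂`:
an element `(f₁, f₂)` stands for `f₁D₁ + f₂D₂`. -/
abbrev W (F : Type*) [Field F] : Type _ := A F × A F

/-- Action of a derivation `D = f₁D₁+f₂D₂ ∈ W(2)` on `A(2)`. -/
def Dw (D : W F) (g : A F) : A F := mulA D.1 (d1 g) + mulA D.2 (d2 g)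

/-- Divergence `div(f₁D₁+f₂D₂) = D₁(f₁) + D₂(f₂)`. -/
def divW (D : W F) : A F := d1 D.1 + d2 D.2

/-- The usual bracket of `W(2)`. -/
def brW (D E : W F) : W F := (Dw D E.1 - Dw E D.1, Dw D E.2 - Dw E D.2)

/-- Multiplication of an element of `W(2)` by a truncated polynomial. -/
def smulA (f : A F) (D : W F) : W F := (mulA f D.1, mulA f D.2)

/-- The Melikian algebra `M = A(2) ⊕ W(2) ⊕ W(2)~` as an `F`-vector space. -/
abbrev Mel (F : Type*) [Field F] : Type _ := A F × W F × W F

/-- Inclusion of `A(2)` into `M`. -/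
def ιA (f : A F) : Mel F := (f, 0, 0)

/-- Inclusion of `W(2)` into `M`. -/
def ιW (D : W F) : Mel F := (0, D, 0)

/-- Inclusion of the second copy `W(2)~` into `M`, `D ↦ D̃`. -/
def ιT (D : W F) : Mel F := (0, 0, D)

/-- The Melikian bracket on `M = A(2) ⊕ W(2) ⊕ W(2)~`, defined by the rules
`[D,Ẽ] = [D,E]~ + 2 div(D) Ẽ`, `[D,f] = D(f) − 2 div(D) f`,
`[f₁D̃₁+f₂D̃₂, g₁D̃₁+g₂D̃₂] = f₁g₂ − f₂g₁`, `[f,Ẽ] = fE`,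
`[f,g] = 2(gD₂(f) − fD₂(g))D̃₁ + 2(fD₁(g) − gD₁(f))D̃₂`,
extended bilinearly and antisymmetrically (with the standard bracket on `W(2)`). -/
def brM (u v : Mel F) : Mel F :=
  ( (Dw u.2.1 v.1 - (2 : F) • mulA (divW u.2.1) v.1)
      - (Dw v.2.1 u.1 - (2 : F) • mulA (divW v.2.1) u.1)
      + (mulA u.2.2.1 v.2.2.2 - mulA u.2.2.2 v.2.2.1)
  , brW u.2.1 v.2.1 + smulA u.1 v.2.2 - smulA v.1 u.2.2
  , (brW u.2.1 v.2.2 + (2 : F) • smulA (divW u.2.1) v.2.2)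
      - (brW v.2.1 u.2.2 + (2 : F) • smulA (divW v.2.1) u.2.2)
      + ((2 : F) • (mulA v.1 (d2 u.1) - mulA u.1 (d2 v.1)),
         (2 : F) • (mulA u.1 (d1 v.1) - mulA v.1 (d1 u.1))) )

/-- `x^b D_i` as an element of `W(2)` (`i = 0` stands for `D₁`, `i = 1` for `D₂`). -/
def wOf (i : Fin 2) (b : Idx) : W F := if i = 0 then (X b, 0) else (0, X b)

/-- The element `x₁D₁ ∈ M`. -/
def x1D1 : Mel F := ιW (X (1, 0), 0)

/-- The element `x₂D₂ ∈ M`. -/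
def x2D2 : Mel F := ιW (0, X (0, 1))

/-- The element `1 ∈ A(2) ⊂ M`. -/
def oneM : Mel F := ιA (X (0, 0))

/-- The element `D_{i+1} ∈ W(2) ⊂ M`. -/
def DD (i : Fin 2) : Mel F := ιW (wOf i (0, 0))

/-- The element `D̃_{i+1} ∈ W(2)~ ⊂ M`. -/
def TT (i : Fin 2) : Mel F := ιT (wOf i (0, 0))

/-- Total degree of a monomial exponent. -/
def degA (b : Idx) : ℤ := (b.1.val : ℤ) + (b.2.val : ℤ)

/-- The degree-`d` piece `M_d` of the `ℤ`-grading of the Melikian algebra: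
`deg_M(f) = 3 deg(f) − 2` on `A(2)`, `deg_M(x^bD_i) = 3(|b|−1)` on `W(2)`, and
`deg_M(x^bD̃_i) = 3(|b|−1)+2` on `W(2)~`. -/
def Md (d : ℤ) : Submodule F (Mel F) :=
  Submodule.span F
    ( {m | ∃ b : Idx, m = ιA (X b) ∧ d = 3 * degA b - 2}
      ∪ {m | ∃ b : Idx, ∃ i : Fin 2, m = ιW (wOf i b) ∧ d = 3 * (degA b - 1)}
      ∪ {m | ∃ b : Idx, ∃ i : Fin 2, m = ιT (wOf i b) ∧ d = 3 * (degA b - 1) + 2} )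

/-- The part `M_{≥ d}` of the Melikian algebra. -/
def Mge (d : ℤ) : Submodule F (Mel F) := ⨆ e : ℤ, ⨆ _ : d ≤ e, (Md e : Submodule F (Mel F))

/-- The squaring `Sq(γ)(x,y) = Σ_{k=1}^{4} [γ^k(x), γ^{5−k}(y)] / (k!(5−k)!)`
of an operator `γ` on the Melikian algebra (characteristic 5). -/
def melSq (γ : Mel F → Mel F) (x y : Mel F) : Mel F :=
  ∑ k ∈ Finset.Icc 1 4,
    ((Nat.factorial k * Nat.factorial (5 - k) : ℕ) : F)⁻¹ • brM (γ^[k] x) (γ^[5 - k] y)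

/-- The Chevalley–Eilenberg coboundary of a linear 1-cochain of `M` with values in the
adjoint representation. -/
def cob (g : Mel F →ₗ[F] Mel F) (x y : Mel F) : Mel F :=
  brM x (g y) - brM y (g x) - g (brM x y)

section Toolkit
variable {F : Type*} [Field F]

@[simp] lemma d1_zero : d1 (0 : A F) = 0 := by
  funext a; simp [d1]

@[simp] lemma d2_zero : d2 (0 : A F) = 0 := by
  funext a; simp [d2]

@[simp] lemma mulA_zero_left (f : A F) : mulA 0 f = 0 := by
  funext a; simp [mulA]

@[simp] lemma mulA_zero_right (f : A F) : mulA f 0 = 0 := by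
  funext a; simp [mulA]

lemma d1_smul (c : F) (f : A F) : d1 (c • f) = c • d1 f := by
  funext a; simp [d1]; split <;> simp [mul_left_comm]

lemma d2_smul (c : F) (f : A F) : d2 (c • f) = c • d2 f := by
  funext a; simp [d2]; split <;> simp [mul_left_comm]

lemma mulA_smul_right (c : F) (f g : A F) : mulA f (c • g) = c • mulA f g := by
  funext a
  simp only [mulA, Pi.smul_apply, smul_eq_mul, Finset.mul_sum]
  refine Finset.sum_congr rfl fun b _ => Finset.sum_congr rfl fun e _ => ?_
  split <;> ring

lemma mulA_comm (f g : A F) : mulA f g = mulA g f := by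
  funext a
  rw [mulA, mulA, Finset.sum_comm]
  refine Finset.sum_congr rfl fun b _ => Finset.sum_congr rfl fun e _ => ?_
  rw [Nat.add_comm (e.1.val), Nat.add_comm (e.2.val)]
  split <;> ring

lemma mulA_smul_left (c : F) (f g : A F) : mulA (c • f) g = c • mulA f g := by
  rw [mulA_comm, mulA_smul_right, mulA_comm]

end Toolkit
section Toolkit2
variable {F : Type*} [Field F]

lemma idx_ext {b c : Idx} (h1 : b.1.val = c.1.val) (h2 : b.2.val = c.2.val) : b = c :=
  Prod.ext (Fin.ext h1) (Fin.ext h2)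

lemma idx_val1 {b c : Idx} (h : b = c) : b.1.val = c.1.val := by rw [h]
lemma idx_val2 {b c : Idx} (h : b = c) : b.2.val = c.2.val := by rw [h]

lemma mulA_X_apply (b : Idx) (f : A F) (a : Idx) :
    mulA (X b) f a =
      if h : b.1.val ≤ a.1.val ∧ b.2.val ≤ a.2.val then
        f (⟨a.1.val - b.1.val, lt_of_le_of_lt (Nat.sub_le _ _) a.1.isLt⟩,
           ⟨a.2.val - b.2.val, lt_of_le_of_lt (Nat.sub_le _ _) a.2.isLt⟩)
      else 0 := by
  rw [mulA]
  rw [Finset.sum_eq_single b]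
  · rw [Finset.sum_eq_single
      ((⟨a.1.val - b.1.val, lt_of_le_of_lt (Nat.sub_le _ _) a.1.isLt⟩ : Fin 5),
       (⟨a.2.val - b.2.val, lt_of_le_of_lt (Nat.sub_le _ _) a.2.isLt⟩ : Fin 5))]
    · by_cases hle : b.1.val ≤ a.1.val ∧ b.2.val ≤ a.2.val
      · rw [dif_pos hle, if_pos (⟨show b.1.val + (a.1.val - b.1.val) = a.1.val by omega,
          show b.2.val + (a.2.val - b.2.val) = a.2.val by omega⟩ :
          b.1.val + (a.1.val - b.1.val) = a.1.val ∧ b.2.val + (a.2.val - b.2.val) = a.2.val)]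
        simp [X]
      · rw [dif_neg hle, if_neg]
        intro hc
        obtain ⟨hc1, hc2⟩ := hc
        have hc1' : b.1.val + (a.1.val - b.1.val) = a.1.val := hc1
        have hc2' : b.2.val + (a.2.val - b.2.val) = a.2.val := hc2
        omega
    · intro c _ hc
      rw [if_neg]
      intro hcond
      obtain ⟨hc1, hc2⟩ := hcond
      exact hc (idx_ext (show c.1.val = a.1.val - b.1.val by omega)
                        (show c.2.val = a.2.val - b.2.val by omega))
    · intro h; exact absurd (Finset.mem_univ _) h
  · intro b' _ hb'
    have hz : X b b' = (0 : F) := by simp [X, hb']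
    simp [hz]
  · intro h; exact absurd (Finset.mem_univ _) h

lemma mulA_X_X {b c d : Idx} (h1 : b.1.val + c.1.val = d.1.val)
    (h2 : b.2.val + c.2.val = d.2.val) : mulA (X b) (X c) = (X d : A F) := by
  funext a
  rw [mulA_X_apply]
  by_cases ha : a = d
  · have ha1 := idx_val1 ha; have ha2 := idx_val2 ha
    rw [dif_pos ⟨by omega, by omega⟩, show (X d : A F) a = 1 by simp [X, ha]]
    show X c _ = 1
    rw [show ((⟨a.1.val - b.1.val, _⟩ : Fin 5), (⟨a.2.val - b.2.val, _⟩ : Fin 5)) = c from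
      idx_ext (show a.1.val - b.1.val = c.1.val by omega)
              (show a.2.val - b.2.val = c.2.val by omega)]
    simp [X]
  · rw [show (X d : A F) a = 0 by simp [X, ha]]
    split_ifs with h
    · show X c _ = 0
      simp only [X]
      rw [if_neg]
      intro he
      have e1 : a.1.val - b.1.val = c.1.val := congrArg (fun p : Idx => p.1.val) he
      have e2 : a.2.val - b.2.val = c.2.val := congrArg (fun p : Idx => p.2.val) he
      exact ha (idx_ext (by omega) (by omega))
    · rfl

lemma mulA_X_X_zero {b c : Idx} (h : 5 ≤ b.1.val + c.1.val ∨ 5 ≤ b.2.val + c.2.val) :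
    mulA (X b) (X c) = (0 : A F) := by
  funext a
  rw [mulA_X_apply, show (0 : A F) a = 0 from rfl]
  split_ifs with hle
  · show X c _ = 0
    simp only [X]
    rw [if_neg]
    intro he
    have e1 : a.1.val - b.1.val = c.1.val := congrArg (fun p : Idx => p.1.val) he
    have e2 : a.2.val - b.2.val = c.2.val := congrArg (fun p : Idx => p.2.val) he
    have := a.1.isLt; have := a.2.isLt
    omega
  · rfl

lemma mulA_X00 (f : A F) : mulA (X (0, 0)) f = f := by
  funext a
  rw [mulA_X_apply, dif_pos ⟨Nat.zero_le _, Nat.zero_le _⟩]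
  congr 1

lemma d1_X {b c : Idx} (h1 : c.1.val + 1 = b.1.val) (h2 : c.2 = b.2) :
    d1 (X b : A F) = (b.1.val : F) • X c := by
  funext a
  simp only [d1, X, Pi.smul_apply, smul_eq_mul]
  have hc2 : c.2.val = b.2.val := congrArg Fin.val h2
  by_cases ha : a = c
  · have ha1 := idx_val1 ha; have ha2 := idx_val2 ha
    rw [dif_pos (by omega), if_pos ha, mul_one]
    split_ifs with hb
    · rw [mul_one]
      exact congrArg Nat.cast (show a.1.val + 1 = b.1.val by omega)
    · exact absurd (idx_ext (b := (⟨a.1.val + 1, by omega⟩, a.2)) (c := b)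
        (show a.1.val + 1 = b.1.val by omega) (show a.2.val = b.2.val by omega))
        (by exact hb)
  · rw [if_neg ha, mul_zero]
    split_ifs with h hb
    · exfalso
      apply ha
      have e1 : a.1.val + 1 = b.1.val := by
        simpa using congrArg (fun p : Idx => p.1.val) hb
      have e2 : a.2.val = b.2.val := by
        simpa using congrArg (fun p : Idx => p.2.val) hb
      exact idx_ext (by omega) (by omega)
    · rw [mul_zero]
    · rfl

lemma d1_X_zero {b : Idx} (h : b.1.val = 0) : d1 (X b : A F) = 0 := by
  funext a
  simp only [d1, X, Pi.zero_apply]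
  split_ifs with h1 hb
  · exfalso
    have : a.1.val + 1 = b.1.val := congrArg (fun p : Idx => p.1.val) hb
    omega
  · rw [mul_zero]
  · rfl

lemma d2_X {b c : Idx} (h1 : c.2.val + 1 = b.2.val) (h2 : c.1 = b.1) :
    d2 (X b : A F) = (b.2.val : F) • X c := by
  funext a
  simp only [d2, X, Pi.smul_apply, smul_eq_mul]
  have hc1 : c.1.val = b.1.val := congrArg Fin.val h2
  by_cases ha : a = c
  · have ha1 := idx_val1 ha; have ha2 := idx_val2 ha
    rw [dif_pos (by omega), if_pos ha, mul_one]
    split_ifs with hb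
    · rw [mul_one]
      exact congrArg Nat.cast (show a.2.val + 1 = b.2.val by omega)
    · exact absurd (idx_ext (b := (a.1, ⟨a.2.val + 1, by omega⟩)) (c := b)
        (show a.1.val = b.1.val by omega) (show a.2.val + 1 = b.2.val by omega))
        (by exact hb)
  · rw [if_neg ha, mul_zero]
    split_ifs with h hb
    · exfalso
      apply ha
      have e1 : a.1.val = b.1.val := by
        simpa using congrArg (fun p : Idx => p.1.val) hb
      have e2 : a.2.val + 1 = b.2.val := by
        simpa using congrArg (fun p : Idx => p.2.val) hb
      exact idx_ext (by omega) (by omega)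
    · rw [mul_zero]
    · rfl

lemma d2_X_zero {b : Idx} (h : b.2.val = 0) : d2 (X b : A F) = 0 := by
  funext a
  simp only [d2, X, Pi.zero_apply]
  split_ifs with h1 hb
  · exfalso
    have : a.2.val + 1 = b.2.val := congrArg (fun p : Idx => p.2.val) hb
    omega
  · rw [mul_zero]
  · rfl

end Toolkit2
section Toolkit3
variable {F : Type*} [Field F]

@[simp] lemma Dw_zero_right (D : W F) : Dw D 0 = 0 := by
  simp [Dw]

@[simp] lemma Dw_zero_left (g : A F) : Dw (0 : W F) g = 0 := by
  simp [Dw]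

@[simp] lemma divW_zero : divW (0 : W F) = 0 := by
  simp [divW]

@[simp] lemma brW_zero_left (D : W F) : brW 0 D = 0 := by
  simp [brW]

@[simp] lemma brW_zero_right (D : W F) : brW D 0 = 0 := by
  simp [brW]

@[simp] lemma smulA_zero_left (D : W F) : smulA (0 : A F) D = 0 := by
  simp [smulA]

@[simp] lemma smulA_zero_right (f : A F) : smulA f (0 : W F) = 0 := by
  simp [smulA]

@[simp] lemma brM_zero_left (v : Mel F) : brM 0 v = 0 := by
  simp [brM]

@[simp] lemma brM_zero_right (u : Mel F) : brM u 0 = 0 := by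
  simp [brM]

lemma divW_pair (f g : A F) : divW ((f, g) : W F) = d1 f + d2 g := rfl


@[simp] lemma d1_X0 : d1 (X (0 : Idx) : A F) = 0 := d1_X_zero rfl
@[simp] lemma d2_X0 : d2 (X (0 : Idx) : A F) = 0 := d2_X_zero rfl
@[simp] lemma mulA_X00' (f : A F) : mulA (X (0 : Idx)) f = f := mulA_X00 f

-- ad D₁ on the various pieces
lemma ad1_A (f : A F) : brM (DD 0) (ιA f) = ιA (d1 f) := by
  simp [brM, DD, ιA, ιW, wOf, Dw, divW, mulA_X00, d1_X_zero (F := F) (b := ((0, 0) : Idx)) rfl]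

lemma ad1_W2 (f : A F) : brM (DD 0) (ιW (0, f)) = ιW (0, d1 f) := by
  simp [brM, DD, ιA, ιW, wOf, brW, Dw, divW, smulA, mulA_X00, d2_X_zero (F := F) (b := ((0, 0) : Idx)) rfl]

lemma ad1_T1 (f : A F) : brM (DD 0) (ιT (f, 0)) = ιT (d1 f, 0) := by
  simp [brM, DD, ιT, ιW, wOf, brW, Dw, divW, smulA, mulA_X00, d1_X_zero (F := F) (b := ((0, 0) : Idx)) rfl]

-- ad D₂ on the various pieces
lemma ad2_A (f : A F) : brM (DD 1) (ιA f) = ιA (d2 f) := by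
  simp [brM, DD, ιA, ιW, wOf, Dw, divW, mulA_X00, d2_X_zero (F := F) (b := ((0, 0) : Idx)) rfl]

lemma ad2_W1 (f : A F) : brM (DD 1) (ιW (f, 0)) = ιW (d2 f, 0) := by
  simp [brM, DD, ιA, ιW, wOf, brW, Dw, divW, smulA, mulA_X00, d1_X_zero (F := F) (b := ((0, 0) : Idx)) rfl]

lemma ad2_T2 (f : A F) : brM (DD 1) (ιT (0, f)) = ιT (0, d2 f) := by
  simp [brM, DD, ιT, ιW, wOf, brW, Dw, divW, smulA, mulA_X00, d2_X_zero (F := F) (b := ((0, 0) : Idx)) rfl]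

-- brackets of special pairs
lemma brWW2 (f g : A F) :
    brM (ιW (0, f)) (ιW (0, g)) = ιW (0, mulA f (d2 g) - mulA g (d2 f)) := by
  simp [brM, ιW, brW, Dw, divW, smulA]

lemma brWW1 (f g : A F) :
    brM (ιW (f, 0)) (ιW (g, 0)) = ιW (mulA f (d1 g) - mulA g (d1 f), 0) := by
  simp [brM, ιW, brW, Dw, divW, smulA]

lemma brAT1 (f g : A F) : brM (ιA f) (ιT (g, 0)) = ιW (mulA f g, 0) := by
  simp [brM, ιA, ιT, ιW, brW, Dw, divW, smulA]

lemma brAT2 (f g : A F) : brM (ιA f) (ιT (0, g)) = ιW (0, mulA f g) := by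
  simp [brM, ιA, ιT, ιW, brW, Dw, divW, smulA]

@[simp] lemma iW_zero : (ιW 0 : Mel F) = 0 := rfl
@[simp] lemma iA_zero : (ιA 0 : Mel F) = 0 := rfl
@[simp] lemma iT_zero : (ιT 0 : Mel F) = 0 := rfl

end Toolkit3
section Toolkit4
variable {F : Type*} [Field F]

lemma melSq_expand (γ : Mel F → Mel F) (x y : Mel F) :
    melSq γ x y =
      ((24 : ℕ) : F)⁻¹ • brM (γ x) (γ (γ (γ (γ y)))) +
      ((12 : ℕ) : F)⁻¹ • brM (γ (γ x)) (γ (γ (γ y))) +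
      ((12 : ℕ) : F)⁻¹ • brM (γ (γ (γ x))) (γ (γ y)) +
      ((24 : ℕ) : F)⁻¹ • brM (γ (γ (γ (γ x)))) (γ y) := by
  rw [melSq, show (Finset.Icc 1 4 : Finset ℕ) = {1, 2, 3, 4} from rfl]
  rw [show ({1, 2, 3, 4} : Finset ℕ) = insert 1 (insert 2 (insert 3 ({4} : Finset ℕ)))
    from rfl]
  rw [Finset.sum_insert (by decide), Finset.sum_insert (by decide),
    Finset.sum_insert (by decide), Finset.sum_singleton]
  have e4 : ∀ z : Mel F, γ^[4] z = γ (γ (γ (γ z))) := by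
    intro z
    rw [show (4 : ℕ) = 3 + 1 from rfl, Function.iterate_succ_apply',
      show (3 : ℕ) = 2 + 1 from rfl, Function.iterate_succ_apply',
      show (2 : ℕ) = 1 + 1 from rfl, Function.iterate_succ_apply',
      Function.iterate_one]
  have e3 : ∀ z : Mel F, γ^[3] z = γ (γ (γ z)) := by
    intro z
    rw [show (3 : ℕ) = 2 + 1 from rfl, Function.iterate_succ_apply',
      show (2 : ℕ) = 1 + 1 from rfl, Function.iterate_succ_apply',
      Function.iterate_one]
  have e2 : ∀ z : Mel F, γ^[2] z = γ (γ z) := by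
    intro z
    rw [show (2 : ℕ) = 1 + 1 from rfl, Function.iterate_succ_apply', Function.iterate_one]
  norm_num [Nat.factorial, e2, e3, e4]
  ring

lemma smul_iW (c : F) (D : W F) : c • (ιW D : Mel F) = ιW (c • D) := by
  simp [ιW, Prod.smul_mk]

lemma char5 [CharP F 5] : (5 : F) = 0 := by
  exact_mod_cast CharP.cast_eq_zero F 5

end Toolkit4
section Parts
variable {F : Type*} [Field F] [CharP F 5]

lemma part1 : melSq (brM (DD 0 : Mel F)) (ιW (0, X (1, 0))) (ιW (0, X (4, 1))) = DD 1 := by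
  have hx1 : brM (DD 0) (ιW (0, X (1, 0)) : Mel F) = ιW (0, X (0, 0)) := by
    rw [ad1_W2, d1_X (b := ((1, 0) : Idx)) (c := ((0, 0) : Idx)) (by decide) (by decide)]
    norm_num [show ((1 : Fin 5)).val = 1 from rfl]
  have hx2 : brM (DD 0) (ιW (0, X (0, 0)) : Mel F) = 0 := by
    rw [ad1_W2, d1_X_zero rfl]; rfl
  have hy1 : brM (DD 0) (ιW (0, X (4, 1)) : Mel F) = ιW (0, (4 : F) • X (3, 1)) := by
    rw [ad1_W2, d1_X (b := ((4, 1) : Idx)) (c := ((3, 1) : Idx)) (by decide) (by decide)]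
    norm_num [show ((4 : Fin 5)).val = 4 from rfl]
  have hy2 : brM (DD 0) (ιW (0, (4 : F) • X (3, 1)) : Mel F)
      = ιW (0, (12 : F) • X (2, 1)) := by
    rw [ad1_W2, d1_smul, d1_X (b := ((3, 1) : Idx)) (c := ((2, 1) : Idx)) (by decide) (by decide), smul_smul]
    norm_num [show ((3 : Fin 5)).val = 3 from rfl]
  have hy3 : brM (DD 0) (ιW (0, (12 : F) • X (2, 1)) : Mel F)
      = ιW (0, (24 : F) • X (1, 1)) := by
    rw [ad1_W2, d1_smul, d1_X (b := ((2, 1) : Idx)) (c := ((1, 1) : Idx)) (by decide) (by decide), smul_smul]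
    norm_num [show ((2 : Fin 5)).val = 2 from rfl]
  have hy4 : brM (DD 0) (ιW (0, (24 : F) • X (1, 1)) : Mel F)
      = ιW (0, (24 : F) • X (0, 1)) := by
    rw [ad1_W2, d1_smul, d1_X (b := ((1, 1) : Idx)) (c := ((0, 1) : Idx)) (by decide) (by decide), smul_smul]
    norm_num [show ((1 : Fin 5)).val = 1 from rfl]
  rw [melSq_expand, hx1, hx2, hy1, hy2, hy3, hy4]
  simp only [brM_zero_left, brM_zero_right, smul_zero, add_zero, zero_add]
  rw [brWW2, d2_X_zero (b := ((0, 0) : Idx)) rfl, mulA_zero_right, sub_zero,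
    d2_smul, d2_X (b := ((0, 1) : Idx)) (c := ((0, 0) : Idx)) (by decide) (by decide),
    mulA_smul_right, mulA_smul_right, mulA_X00]
  rw [show (((0, 1) : Idx).2.val : F) = 1 from by norm_num, one_smul]
  have h24 : ((24 : ℕ) : F) = 4 := by
    have h5 := char5 (F := F)
    push_cast
    linear_combination (4 : F) * h5
  have h4 : (4 : F) ≠ 0 := by
    intro h
    have h5 := char5 (F := F)
    exact one_ne_zero (α := F) (by linear_combination h5 - h)
  rw [smul_iW, Prod.smul_mk, smul_zero, smul_smul, h24, show (4 : F)⁻¹ * 24 = 1 by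
    field_simp
    linear_combination (4 : F) * char5 (F := F), one_smul]
  rfl

lemma part2 : melSq (brM (DD 0 : Mel F)) (ιW (0, X (1, 0))) (ιW (0, X (3, 2))) = 0 := by
  have hx1 : brM (DD 0) (ιW (0, X (1, 0)) : Mel F) = ιW (0, X (0, 0)) := by
    rw [ad1_W2, d1_X (b := ((1, 0) : Idx)) (c := ((0, 0) : Idx)) (by decide) (by decide)]
    norm_num [show ((1 : Fin 5)).val = 1 from rfl]
  have hx2 : brM (DD 0) (ιW (0, X (0, 0)) : Mel F) = 0 := by
    rw [ad1_W2, d1_X_zero rfl]; rfl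
  have hy1 : brM (DD 0) (ιW (0, X (3, 2)) : Mel F) = ιW (0, (3 : F) • X (2, 2)) := by
    rw [ad1_W2, d1_X (b := ((3, 2) : Idx)) (c := ((2, 2) : Idx)) (by decide) (by decide)]
    norm_num [show ((3 : Fin 5)).val = 3 from rfl]
  have hy2 : brM (DD 0) (ιW (0, (3 : F) • X (2, 2)) : Mel F)
      = ιW (0, (6 : F) • X (1, 2)) := by
    rw [ad1_W2, d1_smul, d1_X (b := ((2, 2) : Idx)) (c := ((1, 2) : Idx)) (by decide)
      (by decide), smul_smul]
    norm_num [show ((2 : Fin 5)).val = 2 from rfl]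
  have hy3 : brM (DD 0) (ιW (0, (6 : F) • X (1, 2)) : Mel F)
      = ιW (0, (6 : F) • X (0, 2)) := by
    rw [ad1_W2, d1_smul, d1_X (b := ((1, 2) : Idx)) (c := ((0, 2) : Idx)) (by decide)
      (by decide), smul_smul]
    norm_num [show ((1 : Fin 5)).val = 1 from rfl]
  have hy4 : brM (DD 0) (ιW (0, (6 : F) • X (0, 2)) : Mel F) = 0 := by
    rw [ad1_W2, d1_smul, d1_X_zero rfl]; simp; rfl
  rw [melSq_expand, hx1, hx2, hy1, hy2, hy3, hy4]
  simp only [brM_zero_left, brM_zero_right, smul_zero, add_zero, zero_add]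

lemma part3 : melSq (brM (DD 1 : Mel F)) (ιW (X (0, 1), 0)) (ιW (X (1, 4), 0)) = DD 0 := by
  have hx1 : brM (DD 1) (ιW (X (0, 1), 0) : Mel F) = ιW (X (0, 0), 0) := by
    rw [ad2_W1, d2_X (b := ((0, 1) : Idx)) (c := ((0, 0) : Idx)) (by decide) (by decide)]
    norm_num [show ((1 : Fin 5)).val = 1 from rfl]
  have hx2 : brM (DD 1) (ιW (X (0, 0), 0) : Mel F) = 0 := by
    rw [ad2_W1, d2_X_zero rfl]; rfl
  have hy1 : brM (DD 1) (ιW (X (1, 4), 0) : Mel F) = ιW ((4 : F) • X (1, 3), 0) := by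
    rw [ad2_W1, d2_X (b := ((1, 4) : Idx)) (c := ((1, 3) : Idx)) (by decide) (by decide)]
    norm_num [show ((4 : Fin 5)).val = 4 from rfl]
  have hy2 : brM (DD 1) (ιW ((4 : F) • X (1, 3), 0) : Mel F)
      = ιW ((12 : F) • X (1, 2), 0) := by
    rw [ad2_W1, d2_smul, d2_X (b := ((1, 3) : Idx)) (c := ((1, 2) : Idx)) (by decide)
      (by decide), smul_smul]
    norm_num [show ((3 : Fin 5)).val = 3 from rfl]
  have hy3 : brM (DD 1) (ιW ((12 : F) • X (1, 2), 0) : Mel F)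
      = ιW ((24 : F) • X (1, 1), 0) := by
    rw [ad2_W1, d2_smul, d2_X (b := ((1, 2) : Idx)) (c := ((1, 1) : Idx)) (by decide)
      (by decide), smul_smul]
    norm_num [show ((2 : Fin 5)).val = 2 from rfl]
  have hy4 : brM (DD 1) (ιW ((24 : F) • X (1, 1), 0) : Mel F)
      = ιW ((24 : F) • X (1, 0), 0) := by
    rw [ad2_W1, d2_smul, d2_X (b := ((1, 1) : Idx)) (c := ((1, 0) : Idx)) (by decide)
      (by decide), smul_smul]
    norm_num [show ((1 : Fin 5)).val = 1 from rfl]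
  rw [melSq_expand, hx1, hx2, hy1, hy2, hy3, hy4]
  simp only [brM_zero_left, brM_zero_right, smul_zero, add_zero, zero_add]
  rw [brWW1, d1_X_zero (b := ((0, 0) : Idx)) rfl, mulA_zero_right, sub_zero,
    d1_smul, d1_X (b := ((1, 0) : Idx)) (c := ((0, 0) : Idx)) (by decide) (by decide),
    mulA_smul_right, mulA_smul_right, mulA_X00]
  rw [show (((1, 0) : Idx).1.val : F) = 1 from by norm_num, one_smul]
  have h24 : ((24 : ℕ) : F) = 4 := by
    have h5 := char5 (F := F)
    push_cast
    linear_combination (4 : F) * h5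
  have h4 : (4 : F) ≠ 0 := by
    intro h
    have h5 := char5 (F := F)
    exact one_ne_zero (α := F) (by linear_combination h5 - h)
  rw [smul_iW, Prod.smul_mk, smul_zero, smul_smul, h24, show (4 : F)⁻¹ * 24 = 1 by
    field_simp
    linear_combination (4 : F) * char5 (F := F), one_smul]
  rfl

lemma part4 : melSq (brM (DD 1 : Mel F)) (ιW (X (0, 1), 0)) (ιW (X (2, 3), 0)) = 0 := by
  have hx1 : brM (DD 1) (ιW (X (0, 1), 0) : Mel F) = ιW (X (0, 0), 0) := by
    rw [ad2_W1, d2_X (b := ((0, 1) : Idx)) (c := ((0, 0) : Idx)) (by decide) (by decide)]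
    norm_num [show ((1 : Fin 5)).val = 1 from rfl]
  have hx2 : brM (DD 1) (ιW (X (0, 0), 0) : Mel F) = 0 := by
    rw [ad2_W1, d2_X_zero rfl]; rfl
  have hy1 : brM (DD 1) (ιW (X (2, 3), 0) : Mel F) = ιW ((3 : F) • X (2, 2), 0) := by
    rw [ad2_W1, d2_X (b := ((2, 3) : Idx)) (c := ((2, 2) : Idx)) (by decide) (by decide)]
    norm_num [show ((3 : Fin 5)).val = 3 from rfl]
  have hy2 : brM (DD 1) (ιW ((3 : F) • X (2, 2), 0) : Mel F)
      = ιW ((6 : F) • X (2, 1), 0) := by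
    rw [ad2_W1, d2_smul, d2_X (b := ((2, 2) : Idx)) (c := ((2, 1) : Idx)) (by decide)
      (by decide), smul_smul]
    norm_num [show ((2 : Fin 5)).val = 2 from rfl]
  have hy3 : brM (DD 1) (ιW ((6 : F) • X (2, 1), 0) : Mel F)
      = ιW ((6 : F) • X (2, 0), 0) := by
    rw [ad2_W1, d2_smul, d2_X (b := ((2, 1) : Idx)) (c := ((2, 0) : Idx)) (by decide)
      (by decide), smul_smul]
    norm_num [show ((1 : Fin 5)).val = 1 from rfl]
  have hy4 : brM (DD 1) (ιW ((6 : F) • X (2, 0), 0) : Mel F) = 0 := by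
    rw [ad2_W1, d2_smul, d2_X_zero rfl]; simp; rfl
  rw [melSq_expand, hx1, hx2, hy1, hy2, hy3, hy4]
  simp only [brM_zero_left, brM_zero_right, smul_zero, add_zero, zero_add]

-- Sq evaluations at the detecting pairs
lemma sq1P : melSq (brM (DD 0 : Mel F)) (ιA (X (1, 0))) (ιT (X (4, 0), 0)) = DD 0 := by
  have hx1 : brM (DD 0) (ιA (X (1, 0)) : Mel F) = ιA (X (0, 0)) := by
    rw [ad1_A, d1_X (b := ((1, 0) : Idx)) (c := ((0, 0) : Idx)) (by decide) (by decide)]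
    norm_num [show ((1 : Fin 5)).val = 1 from rfl]
  have hx2 : brM (DD 0) (ιA (X (0, 0)) : Mel F) = 0 := by
    rw [ad1_A, d1_X_zero rfl]; simp
  have hy1 : brM (DD 0) (ιT (X (4, 0), 0) : Mel F) = ιT ((4 : F) • X (3, 0), 0) := by
    rw [ad1_T1, d1_X (b := ((4, 0) : Idx)) (c := ((3, 0) : Idx)) (by decide) (by decide)]
    norm_num [show ((4 : Fin 5)).val = 4 from rfl]
  have hy2 : brM (DD 0) (ιT ((4 : F) • X (3, 0), 0) : Mel F)
      = ιT ((12 : F) • X (2, 0), 0) := by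
    rw [ad1_T1, d1_smul, d1_X (b := ((3, 0) : Idx)) (c := ((2, 0) : Idx)) (by decide)
      (by decide), smul_smul]
    norm_num [show ((3 : Fin 5)).val = 3 from rfl]
  have hy3 : brM (DD 0) (ιT ((12 : F) • X (2, 0), 0) : Mel F)
      = ιT ((24 : F) • X (1, 0), 0) := by
    rw [ad1_T1, d1_smul, d1_X (b := ((2, 0) : Idx)) (c := ((1, 0) : Idx)) (by decide)
      (by decide), smul_smul]
    norm_num [show ((2 : Fin 5)).val = 2 from rfl]
  have hy4 : brM (DD 0) (ιT ((24 : F) • X (1, 0), 0) : Mel F)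
      = ιT ((24 : F) • X (0, 0), 0) := by
    rw [ad1_T1, d1_smul, d1_X (b := ((1, 0) : Idx)) (c := ((0, 0) : Idx)) (by decide)
      (by decide), smul_smul]
    norm_num [show ((1 : Fin 5)).val = 1 from rfl]
  rw [melSq_expand, hx1, hx2, hy1, hy2, hy3, hy4]
  simp only [brM_zero_left, brM_zero_right, smul_zero, add_zero, zero_add]
  rw [brAT1, mulA_smul_right, mulA_X00]
  have h24 : ((24 : ℕ) : F) = 4 := by
    have h5 := char5 (F := F)
    push_cast
    linear_combination (4 : F) * h5
  have h4 : (4 : F) ≠ 0 := by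
    intro h
    have h5 := char5 (F := F)
    exact one_ne_zero (α := F) (by linear_combination h5 - h)
  rw [smul_iW, Prod.smul_mk, smul_zero, smul_smul, h24, show (4 : F)⁻¹ * 24 = 1 by
    field_simp
    linear_combination (4 : F) * char5 (F := F), one_smul]
  rfl

lemma sq2P : melSq (brM (DD 1 : Mel F)) (ιA (X (1, 0))) (ιT (X (4, 0), 0)) = 0 := by
  have hx1 : brM (DD 1) (ιA (X (1, 0)) : Mel F) = 0 := by
    rw [ad2_A, d2_X_zero rfl]; simp
  rw [melSq_expand, hx1]
  simp only [brM_zero_left, brM_zero_right, smul_zero, add_zero, zero_add]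

lemma sq2Q : melSq (brM (DD 1 : Mel F)) (ιA (X (0, 1))) (ιT (0, X (0, 4))) = DD 1 := by
  have hx1 : brM (DD 1) (ιA (X (0, 1)) : Mel F) = ιA (X (0, 0)) := by
    rw [ad2_A, d2_X (b := ((0, 1) : Idx)) (c := ((0, 0) : Idx)) (by decide) (by decide)]
    norm_num [show ((1 : Fin 5)).val = 1 from rfl]
  have hx2 : brM (DD 1) (ιA (X (0, 0)) : Mel F) = 0 := by
    rw [ad2_A, d2_X_zero rfl]; simp
  have hy1 : brM (DD 1) (ιT (0, X (0, 4)) : Mel F) = ιT (0, (4 : F) • X (0, 3)) := by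
    rw [ad2_T2, d2_X (b := ((0, 4) : Idx)) (c := ((0, 3) : Idx)) (by decide) (by decide)]
    norm_num [show ((4 : Fin 5)).val = 4 from rfl]
  have hy2 : brM (DD 1) (ιT (0, (4 : F) • X (0, 3)) : Mel F)
      = ιT (0, (12 : F) • X (0, 2)) := by
    rw [ad2_T2, d2_smul, d2_X (b := ((0, 3) : Idx)) (c := ((0, 2) : Idx)) (by decide)
      (by decide), smul_smul]
    norm_num [show ((3 : Fin 5)).val = 3 from rfl]
  have hy3 : brM (DD 1) (ιT (0, (12 : F) • X (0, 2)) : Mel F)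
      = ιT (0, (24 : F) • X (0, 1)) := by
    rw [ad2_T2, d2_smul, d2_X (b := ((0, 2) : Idx)) (c := ((0, 1) : Idx)) (by decide)
      (by decide), smul_smul]
    norm_num [show ((2 : Fin 5)).val = 2 from rfl]
  have hy4 : brM (DD 1) (ιT (0, (24 : F) • X (0, 1)) : Mel F)
      = ιT (0, (24 : F) • X (0, 0)) := by
    rw [ad2_T2, d2_smul, d2_X (b := ((0, 1) : Idx)) (c := ((0, 0) : Idx)) (by decide)
      (by decide), smul_smul]
    norm_num [show ((1 : Fin 5)).val = 1 from rfl]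
  rw [melSq_expand, hx1, hx2, hy1, hy2, hy3, hy4]
  simp only [brM_zero_left, brM_zero_right, smul_zero, add_zero, zero_add]
  rw [brAT2, mulA_smul_right, mulA_X00]
  have h24 : ((24 : ℕ) : F) = 4 := by
    have h5 := char5 (F := F)
    push_cast
    linear_combination (4 : F) * h5
  have h4 : (4 : F) ≠ 0 := by
    intro h
    have h5 := char5 (F := F)
    exact one_ne_zero (α := F) (by linear_combination h5 - h)
  rw [smul_iW, Prod.smul_mk, smul_zero, smul_smul, h24, show (4 : F)⁻¹ * 24 = 1 by
    field_simp
    linear_combination (4 : F) * char5 (F := F), one_smul]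
  rfl

lemma sq1Q : melSq (brM (DD 0 : Mel F)) (ιA (X (0, 1))) (ιT (0, X (0, 4))) = 0 := by
  have hx1 : brM (DD 0) (ιA (X (0, 1)) : Mel F) = 0 := by
    rw [ad1_A, d1_X_zero rfl]; simp
  rw [melSq_expand, hx1]
  simp only [brM_zero_left, brM_zero_right, smul_zero, add_zero, zero_add]

-- vanishing of bracket at the detecting pairs
lemma hP0 : brM (ιA (X (1, 0)) : Mel F) (ιT (X (4, 0), 0)) = 0 := by
  rw [brAT1, mulA_X_X_zero (by left; decide)]
  rfl

lemma hQ0 : brM (ιA (X (0, 1)) : Mel F) (ιT (0, X (0, 4))) = 0 := by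
  rw [brAT2, mulA_X_X_zero (by right; decide)]
  rfl

-- coordinate vanishing lemmas
lemma cW1a (v : Mel F) : (brM (ιA (X (1, 0)) : Mel F) v).2.1.1 (0, 0) = 0 := by
  have h : (brM (ιA (X (1, 0)) : Mel F) v).2.1 = smulA (X (1, 0)) v.2.2 := by
    simp [brM, ιA]
  rw [h]
  show mulA (X (1, 0)) v.2.2.1 (0, 0) = 0
  rw [mulA_X_apply, dif_neg (by decide)]

lemma cW1b (v : Mel F) : (brM (ιT (X (4, 0), 0) : Mel F) v).2.1.1 (0, 0) = 0 := by
  have h : (brM (ιT (X (4, 0), 0) : Mel F) v).2.1 = -smulA v.1 (X (4, 0), 0) := by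
    simp [brM, ιT]
  rw [h]
  show -(mulA v.1 (X (4, 0)) (0, 0)) = 0
  rw [mulA_comm, mulA_X_apply, dif_neg (by decide), neg_zero]

lemma cW2a (v : Mel F) : (brM (ιA (X (0, 1)) : Mel F) v).2.1.2 (0, 0) = 0 := by
  have h : (brM (ιA (X (0, 1)) : Mel F) v).2.1 = smulA (X (0, 1)) v.2.2 := by
    simp [brM, ιA]
  rw [h]
  show mulA (X (0, 1)) v.2.2.2 (0, 0) = 0
  rw [mulA_X_apply, dif_neg (by decide)]

lemma cW2b (v : Mel F) : (brM (ιT (0, X (0, 4)) : Mel F) v).2.1.2 (0, 0) = 0 := by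
  have h : (brM (ιT (0, X (0, 4)) : Mel F) v).2.1 = -smulA v.1 (0, X (0, 4)) := by
    simp [brM, ιT]
  rw [h]
  show -(mulA v.1 (X (0, 4)) (0, 0)) = 0
  rw [mulA_comm, mulA_X_apply, dif_neg (by decide), neg_zero]

end Parts

/-- In the Melikian algebra over a field of characteristic 5,
`Sq(D_i)(x_iD_j, x_i⁴x_jD_j) = D_j` and `Sq(D_i)(x_iD_j, x_i³x_j²D_j) = 0` for `i ≠ j`,
and the classes of `Sq(D₁)` and `Sq(D₂)` are linearly independent in `H²(M, M)`. -/
theorem melikian_sq_D_independent (F : Type*) [Field F] [CharP F 5] :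
    melSq (brM (DD 0 : Mel F)) (ιW (0, X (1, 0))) (ιW (0, X (4, 1))) = DD 1 ∧
    melSq (brM (DD 0 : Mel F)) (ιW (0, X (1, 0))) (ιW (0, X (3, 2))) = 0 ∧
    melSq (brM (DD 1 : Mel F)) (ιW (X (0, 1), 0)) (ιW (X (1, 4), 0)) = DD 0 ∧
    melSq (brM (DD 1 : Mel F)) (ιW (X (0, 1), 0)) (ιW (X (2, 3), 0)) = 0 ∧
    (∀ c₁ c₂ : F,
      (∃ g : Mel F →ₗ[F] Mel F, ∀ x y : Mel F,
        c₁ • melSq (brM (DD 0)) x y + c₂ • melSq (brM (DD 1)) x y = cob g x y) →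
      c₁ = 0 ∧ c₂ = 0) := by
  refine ⟨part1, part2, part3, part4, ?_⟩
  rintro c₁ c₂ ⟨g, hg⟩
  constructor
  · have e1 := hg (ιA (X (1, 0))) (ιT (X (4, 0), 0))
    rw [sq1P, sq2P, smul_zero, add_zero] at e1
    rw [cob, hP0, g.map_zero, sub_zero] at e1
    have e2 := congrArg (fun m : Mel F => m.2.1.1 ((0 : Fin 5), (0 : Fin 5))) e1
    simp only [Prod.snd_sub, Prod.fst_sub, Pi.sub_apply] at e2
    rw [cW1a, cW1b, sub_zero] at e2
    simpa [DD, ιW, wOf, X, map_zero, neg_zero] using e2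
  · have e1 := hg (ιA (X (0, 1))) (ιT (0, X (0, 4)))
    rw [sq2Q, sq1Q, smul_zero, zero_add] at e1
    rw [cob, hQ0, g.map_zero, sub_zero] at e1
    have e2 := congrArg (fun m : Mel F => m.2.1.2 ((0 : Fin 5), (0 : Fin 5))) e1
    simp only [Prod.snd_sub, Prod.fst_sub, Pi.sub_apply] at e2
    rw [cW2a, cW2b, sub_zero] at e2
    simpa [DD, ιW, wOf, X, map_zero, neg_zero] using e2

end Melikian
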